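/- arXiv:2304.00627 — 3 statements merged into one kernel-verified Lean document; each statement's English description precedes it below -/
import Mathlib

section
/- Let C be a GLRS code of dimension k ≥ 1 with σ = Id. Then the Schur square C ⋆ C (the span of all elementwise products of pairs of codewords) has F_{q^m}-dimension min(ℓ, 2k−1), where ℓ is the number of blocks. -/
open Polynomial

lemma eval_eq_fin_sum {F : Type*} [CommRing F] {m : ℕ} {p : Polynomial F}
    (h : p.natDegree < m) (x : F) :
    p.eval x = ∑ d : Fin m, p.coeff d * x ^ (d : ℕ) := by
  rw [Fin.sum_univ_eq_sum_range (fun d => p.coeff d * x ^ d) m,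
    Polynomial.eval_eq_sum_range' h]

lemma natDegree_lt_of_degree_lt' {F : Type*} [Field F] {f : Polynomial F} {k : ℕ}
    (hk : 1 ≤ k) (h : f.degree < (k : ℕ)) : f.natDegree < k := by
  rcases eq_or_ne f 0 with rfl | hf
  · simp only [natDegree_zero]; omega
  · exact (Polynomial.natDegree_lt_iff_degree_lt hf).2 h


/-- Square-code dimension of a GLRS code with `σ = Id`: if `C` is a GLRS code of
dimension `k ≥ 1` with pairwise distinct nonzero evaluation parameters, nonzero
locators and nonzero block multipliers, then `dim (C ⋆ C) = min(ℓ, 2k−1)`. -/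
theorem GLRS_square_code_dimension {F : Type*} [Field F]
    {ℓ : ℕ} (n : Fin ℓ → ℕ) (hn : ∀ i, 0 < n i)
    (k : ℕ) (hk : 1 ≤ k)
    (a : Fin ℓ → F) (ha : Function.Injective a) (ha0 : ∀ i, a i ≠ 0)
    (β : ∀ i : Fin ℓ, Fin (n i) → F) (hβ : ∀ i j, β i j ≠ 0)
    (v : Fin ℓ → F) (hv : ∀ i, v i ≠ 0) :
    let C : Set (∀ i : Fin ℓ, Fin (n i) → F) :=
      {x | ∃ f : Polynomial F, f.degree < (k : ℕ) ∧
        ∀ i j, x i j = v i * β i j * f.eval (a i)}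
    Module.finrank F (Submodule.span F
        {z : ∀ i : Fin ℓ, Fin (n i) → F | ∃ c ∈ C, ∃ c' ∈ C, z = c * c'})
      = min ℓ (2 * k - 1) := by
  intro C
  set m := 2 * k - 1 with hm
  have hm1 : 1 ≤ m := by omega
  -- the evaluation (Vandermonde) map
  let E : (Fin m → F) →ₗ[F] (Fin ℓ → F) :=
    { toFun := fun c i => ∑ d : Fin m, c d * a i ^ (d : ℕ)
      map_add' := by
        intro c c'; funext i
        simp [add_mul, Finset.sum_add_distrib]
      map_smul' := by
        intro r c; funext i
        simp [Finset.mul_sum, mul_assoc] }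
  -- the block scaling map
  let T : (Fin ℓ → F) →ₗ[F] (∀ i : Fin ℓ, Fin (n i) → F) :=
    { toFun := fun w i j => (v i * β i j) ^ 2 * w i
      map_add' := by intro w w'; funext i j; simp [mul_add]
      map_smul' := by intro r w; funext i j; simp; ring }
  have hT : Function.Injective T := by
    intro w w' hww
    funext i
    have h1 := congrFun (congrFun hww i) ⟨0, hn i⟩
    have h2 : (v i * β i ⟨0, hn i⟩) ^ 2 ≠ 0 :=
      pow_ne_zero _ (mul_ne_zero (hv i) (hβ i _))
    exact mul_left_cancel₀ h2 h1
  -- the span of the Schur set equals the range of T ∘ E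
  have hspan : Submodule.span F
      {z : ∀ i : Fin ℓ, Fin (n i) → F | ∃ c ∈ C, ∃ c' ∈ C, z = c * c'}
      = LinearMap.range (T ∘ₗ E) := by
    apply le_antisymm
    · rw [Submodule.span_le]
      rintro z ⟨c, ⟨f, hf, hcf⟩, c', ⟨g, hg, hcg⟩, rfl⟩
      have hfg : (f * g).natDegree < m := by
        have := Polynomial.natDegree_mul_le (p := f) (q := g)
        have hf' := natDegree_lt_of_degree_lt' hk hf
        have hg' := natDegree_lt_of_degree_lt' hk hg
        omega
      refine ⟨fun d => (f * g).coeff d, ?_⟩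
      funext i j
      have heq : (f * g).eval (a i) = ∑ d : Fin m, (f * g).coeff d * a i ^ (d : ℕ) :=
        eval_eq_fin_sum hfg _
      simp only [LinearMap.comp_apply, T, E, LinearMap.coe_mk, AddHom.coe_mk]
      rw [← heq, Polynomial.eval_mul]
      simp only [Pi.mul_apply, hcf, hcg]
      ring
    · rintro z ⟨c, rfl⟩
      have hc : c = ∑ d : Fin m, c d • (Pi.single d 1 : Fin m → F) := by
        funext e
        simp [Pi.single_apply, Finset.sum_ite_eq' (Finset.univ : Finset (Fin m))]
      rw [hc, map_sum]
      refine Submodule.sum_mem _ fun d _ => ?_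
      rw [map_smul]
      refine Submodule.smul_mem _ _ (Submodule.subset_span ?_)
      set d1 : ℕ := min (d : ℕ) (k - 1) with hd1
      set d2 : ℕ := (d : ℕ) - d1 with hd2
      have hdlt : (d : ℕ) < m := d.isLt
      have hd1k : d1 < k := by omega
      have hd2k : d2 < k := by omega
      have hdsum : d1 + d2 = (d : ℕ) := by omega
      refine ⟨fun i j => v i * β i j * a i ^ d1, ⟨X ^ d1, ?_, ?_⟩,
        fun i j => v i * β i j * a i ^ d2, ⟨X ^ d2, ?_, ?_⟩, ?_⟩
      · rw [Polynomial.degree_X_pow]; exact_mod_cast hd1k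
      · intro i j; simp
      · rw [Polynomial.degree_X_pow]; exact_mod_cast hd2k
      · intro i j; simp
      · funext i j
        simp only [LinearMap.comp_apply, T, E, LinearMap.coe_mk, AddHom.coe_mk,
          Pi.mul_apply, Pi.single_apply]
        rw [Finset.sum_eq_single d (by intro b _ hb; simp [hb]) (by simp)]
        rw [← hdsum, pow_add]
        simp
        ring
  rw [hspan]
  have hcomp : LinearMap.range (T ∘ₗ E) = Submodule.map T (LinearMap.range E) := by
    rw [LinearMap.range_comp]
  rw [hcomp]
  rw [← (Submodule.equivMapOfInjective T hT (LinearMap.range E)).finrank_eq]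
  -- now compute finrank of range E
  rcases le_or_gt m ℓ with hml | hml
  · -- E is injective
    have hEinj : Function.Injective E := by
      rw [← LinearMap.ker_eq_bot, LinearMap.ker_eq_bot']
      intro w hw
      set p : Polynomial F := ∑ d : Fin m, Polynomial.monomial (d : ℕ) (w d) with hp
      have hpdeg : p.natDegree < m := by
        refine natDegree_lt_of_degree_lt' hm1 ?_
        refine lt_of_le_of_lt (Polynomial.degree_sum_le _ _) ?_
        rw [Finset.sup_lt_iff (by exact_mod_cast WithBot.bot_lt_coe m)]
        intro d _
        exact lt_of_le_of_lt (Polynomial.degree_monomial_le _ _)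
          (by exact_mod_cast d.isLt)
      have hcoeff : ∀ e : Fin m, p.coeff e = w e := by
        intro e
        rw [hp, Polynomial.finset_sum_coeff]
        rw [Finset.sum_eq_single e
          (by intro b _ hb; rw [Polynomial.coeff_monomial];
              exact if_neg (fun h => hb (Fin.val_injective h)))
          (by simp)]
        simp [Polynomial.coeff_monomial]
      have heval : ∀ i, p.eval (a i) = 0 := by
        intro i
        have := congrFun hw i
        simp only [E, LinearMap.coe_mk, AddHom.coe_mk, Pi.zero_apply] at this
        rw [eval_eq_fin_sum hpdeg]
        rw [← this]
        exact Finset.sum_congr rfl fun d _ => by rw [hcoeff d]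
      have hp0 : p = 0 :=
        Polynomial.eq_zero_of_natDegree_lt_card_of_eval_eq_zero p ha heval
          (by simpa using lt_of_lt_of_le hpdeg hml)
      funext e
      rw [← hcoeff e, hp0]
      simp
    rw [LinearMap.finrank_range_of_inj hEinj, Module.finrank_fin_fun]
    omega
  · -- E is surjective
    have hEsurj : Function.Surjective E := by
      intro w
      set p : Polynomial F := Lagrange.interpolate Finset.univ a w with hp
      have hvs : Set.InjOn a (Finset.univ : Finset (Fin ℓ)) := ha.injOn
      have hpdeg : p.natDegree < m := by
        refine natDegree_lt_of_degree_lt' hm1 ?_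
        refine lt_of_lt_of_le (Lagrange.degree_interpolate_lt _ hvs) ?_
        simp only [Finset.card_univ, Fintype.card_fin]
        exact_mod_cast hml.le
      refine ⟨fun d => p.coeff d, ?_⟩
      funext i
      show ∑ d : Fin m, p.coeff d * a i ^ (d : ℕ) = w i
      rw [← eval_eq_fin_sum hpdeg]
      exact Lagrange.eval_interpolate_at_node _ hvs (Finset.mem_univ i)
    rw [LinearMap.range_eq_top.2 hEsurj, finrank_top, Module.finrank_fin_fun]
    omega
end

section
/- Under the same hypotheses, the intersection of the row space of M_k(β)_a with the row space of D_a(M_k(β)_a) equals the row space of M_{k−1}(D_a(β))_a, and has dimension k−1. -/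
open Submodule Set



theorem moore_key {K F : Type*} [Field K] [Field F] [Algebra K F]
    {ℓ : ℕ} {n : Fin ℓ → ℕ}
    (σ : F ≃+* F)
    (hfix : ∀ x : F, σ x = x ↔ x ∈ (algebraMap K F).range)
    (b : Fin ℓ → F) (hb : ∀ i, b i ≠ 0)
    (hdist : ∀ i j : Fin ℓ, i ≠ j → ∀ c : F, c ≠ 0 → σ c * c⁻¹ * b i ≠ b j)
    (β : ∀ i : Fin ℓ, Fin (n i) → F)
    (hβ : ∀ i, LinearIndependent K (β i))
    (Λ : Submodule F (∀ i, Fin (n i) → F))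
    (hΛ : Λ ≠ ⊥)
    (hΨ : ∀ lam ∈ Λ, (fun i j => σ.symm (b i * lam i j)) ∈ Λ)
    (hpair : ∀ lam ∈ Λ, (∑ i, ∑ j, lam i j * β i j) = 0) : False := by
  classical
  -- support of an element
  let supp : (∀ i, Fin (n i) → F) → Finset ((i : Fin ℓ) × Fin (n i)) :=
    fun lam => Finset.univ.filter (fun p => lam p.1 p.2 ≠ 0)
  have hsupp_ne : ∀ lam : (∀ i, Fin (n i) → F), lam ≠ 0 → (supp lam).Nonempty := by
    intro lam hlam
    by_contra h
    apply hlam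
    funext i j
    by_contra hij
    exact h ⟨⟨i, j⟩, Finset.mem_filter.mpr ⟨Finset.mem_univ _, hij⟩⟩
  obtain ⟨lam₀, hlam₀Λ, hlam₀⟩ := (Submodule.ne_bot_iff Λ).mp hΛ
  -- minimal support
  have hex : ∃ m : ℕ, ∃ lam ∈ Λ, lam ≠ 0 ∧ (supp lam).card = m :=
    ⟨_, lam₀, hlam₀Λ, hlam₀, rfl⟩
  obtain ⟨lam, hlamΛ, hlam, hcard⟩ := Nat.find_spec hex
  have hmin : ∀ lam' ∈ Λ, lam' ≠ 0 → Nat.find hex ≤ (supp lam').card := by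
    intro lam' h1 h2
    by_contra h
    exact Nat.find_min hex (lt_of_not_ge h) ⟨lam', h1, h2, rfl⟩
  obtain ⟨p₀, hp₀⟩ := hsupp_ne lam hlam
  have hp₀ : lam p₀.1 p₀.2 ≠ 0 := by simpa [supp] using hp₀
  set i₀ := p₀.1
  set c₀ := lam p₀.1 p₀.2 with hc₀
  set Ψ : ∀ i, Fin (n i) → F := fun i j => σ.symm (b i * lam i j) with hΨdef
  have hΨΛ : Ψ ∈ Λ := hΨ lam hlamΛ
  set μ : ∀ i, Fin (n i) → F := c₀ • Ψ - (Ψ i₀ p₀.2) • lam with hμ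
  have hμΛ : μ ∈ Λ := Λ.sub_mem (Λ.smul_mem _ hΨΛ) (Λ.smul_mem _ hlamΛ)
  have hμ0 : μ = 0 := by
    by_contra h
    have h1 : Nat.find hex ≤ (supp μ).card := hmin μ hμΛ h
    have h2 : supp μ ⊆ supp lam := by
      intro p hp
      simp only [supp, Finset.mem_filter, Finset.mem_univ, true_and] at hp ⊢
      intro hz
      apply hp
      simp [hμ, hΨdef, Pi.smul_apply, Pi.sub_apply, hz]
    have h3 : p₀ ∉ supp μ := by
      simp [supp, hμ]
      ring
    have h4 : (supp μ).card < (supp lam).card :=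
      Finset.card_lt_card (Finset.ssubset_iff_of_subset h2 |>.mpr ⟨p₀, by
        simpa [supp] using hp₀, h3⟩)
    omega
  -- the proportionality relation
  have hrel : ∀ i j, c₀ * σ.symm (b i * lam i j) = σ.symm (b i₀ * c₀) * lam i j := by
    intro i j
    have := congrFun (congrFun hμ0 i) j
    simpa [hμ, hΨdef, sub_eq_zero] using this
  -- apply σ to the relation
  have hrelσ : ∀ i j, σ c₀ * (b i * lam i j) = b i₀ * c₀ * σ (lam i j) := by
    intro i j
    have := congrArg σ (hrel i j)
    simpa [map_mul] using this
  have hc₀σ : σ c₀ ≠ 0 := fun h => hp₀ (by simpa using σ.injective (h.trans (map_zero σ).symm))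
  -- step 1 : support in block i₀
  have hblock : ∀ i, i ≠ i₀ → ∀ j, lam i j = 0 := by
    intro i hi j
    by_contra hij
    apply hdist i₀ i (fun h => hi h.symm) (lam i j / c₀) (div_ne_zero hij hp₀)
    have h := hrelσ i j
    rw [map_div₀]
    field_simp
    linear_combination -h
  -- step 2 : in block i₀ all ratios are fixed by σ
  have hK : ∀ j, ∃ c : K, lam i₀ j = algebraMap K F c * c₀ := by
    intro j
    have h := hrelσ i₀ j
    have h2 : σ (lam i₀ j / c₀) = lam i₀ j / c₀ := by
      rw [map_div₀, div_eq_div_iff hc₀σ hp₀]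
      refine mul_left_cancel₀ (hb i₀) ?_
      linear_combination -h
    obtain ⟨c, hc⟩ := (hfix _).mp h2
    exact ⟨c, by rw [hc]; field_simp⟩
  choose cf hcf using hK
  -- step 3 : contradiction with linear independence of β i₀
  have hsum := hpair lam hlamΛ
  have hsum2 : (∑ j, cf j • β i₀ j) = 0 := by
    have h1 : ∀ i, i ≠ i₀ → (∑ j, lam i j * β i j) = 0 := by
      intro i hi
      simp [hblock i hi]
    have h2 : (∑ j, lam i₀ j * β i₀ j) = 0 := by
      rwa [Finset.sum_eq_single_of_mem i₀ (Finset.mem_univ _)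
        (fun i _ hi => h1 i hi)] at hsum
    have h3 : (∑ j, lam i₀ j * β i₀ j) = c₀ * ∑ j, cf j • β i₀ j := by
      rw [Finset.mul_sum]
      congr 1
      funext j
      rw [hcf j, Algebra.smul_def]
      ring
    have := h3 ▸ h2
    exact (mul_eq_zero.mp this).resolve_left hp₀
  have hz := Fintype.linearIndependent_iff.mp (hβ i₀) cf hsum2 p₀.2
  have h5 := hcf p₀.2
  rw [hz] at h5
  simp only [map_zero, zero_mul] at h5
  exact hp₀ h5



theorem moore_step {K F : Type*} [Field K] [Field F] [Algebra K F]
    {ℓ : ℕ} {n : Fin ℓ → ℕ}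
    (σ : F ≃+* F) (γ : F)
    (hfix : ∀ x : F, σ x = x ↔ x ∈ (algebraMap K F).range)
    (b : Fin ℓ → F) (hb : ∀ i, b i ≠ 0)
    (hdist : ∀ i j : Fin ℓ, i ≠ j → ∀ c : F, c ≠ 0 → σ c * c⁻¹ * b i ≠ b j)
    (β : ∀ i : Fin ℓ, Fin (n i) → F)
    (hβ : ∀ i, LinearIndependent K (β i))
    (D : (∀ i : Fin ℓ, Fin (n i) → F) → (∀ i : Fin ℓ, Fin (n i) → F))
    (hD : ∀ y i j, D y i j = γ * y i j + b i * σ (y i j))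
    (r : ℕ) (hr : r < ∑ i, n i) :
    D^[r] β ∉ Submodule.span F (Set.range fun t : Fin r => D^[(t : ℕ)] β) := by
  classical
  intro hmem
  set v : ℕ → (∀ i, Fin (n i) → F) := fun s => D^[s] β with hv
  set U := Submodule.span F (Set.range fun t : Fin r => v (t : ℕ)) with hU
  have hvsucc : ∀ s, v (s + 1) = D (v s) := fun s => Function.iterate_succ_apply' D s β
  -- D maps U into U
  have hU_D : ∀ u ∈ U, D u ∈ U := by
    intro u hu
    induction hu using Submodule.span_induction with
    | mem x hx =>
      obtain ⟨t, rfl⟩ := hx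
      rw [← hvsucc]
      have ht : (t : ℕ) + 1 ≤ r := t.isLt
      rcases lt_or_eq_of_le ht with h | h
      · exact Submodule.subset_span ⟨⟨(t : ℕ) + 1, h⟩, rfl⟩
      · rw [h]; exact hmem
    | zero =>
      have : D 0 = 0 := by funext i j; rw [hD]; simp
      rw [this]; exact U.zero_mem
    | add x y _ _ hx hy =>
      have : D (x + y) = D x + D y := by
        funext i j; rw [hD]; simp only [Pi.add_apply, hD, map_add]; ring
      rw [this]; exact U.add_mem hx hy
    | smul c x hx hDx =>
      have : D (c • x) = σ c • D x + (γ * (c - σ c)) • x := by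
        funext i j
        simp only [Pi.add_apply, Pi.smul_apply, smul_eq_mul, hD, map_mul]
        ring
      rw [this]
      exact U.add_mem (U.smul_mem _ hDx) (U.smul_mem _ hx)
  have hUs : ∀ s, v s ∈ U := by
    intro s
    induction s with
    | zero =>
      rcases Nat.eq_zero_or_pos r with h | h
      · subst h; exact hmem
      · exact Submodule.subset_span ⟨⟨0, h⟩, rfl⟩
    | succ s ih => rw [hvsucc]; exact hU_D _ ih
  -- the pairing map
  let Θ : (∀ i, Fin (n i) → F) →ₗ[F] (Fin r → F) :=
    { toFun := fun lam t => ∑ i, ∑ j, lam i j * v (t : ℕ) i j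
      map_add' := by
        intro x y; funext t
        simp [Pi.add_apply, add_mul, Finset.sum_add_distrib]
      map_smul' := by
        intro c x; funext t
        simp [Finset.mul_sum, mul_assoc] }
  set Λ := LinearMap.ker Θ with hΛdef
  have hΛmem : ∀ lam, lam ∈ Λ ↔ ∀ t : Fin r, (∑ i, ∑ j, lam i j * v (t : ℕ) i j) = 0 := by
    intro lam
    constructor
    · intro h t
      exact congrFun (LinearMap.mem_ker.mp h) t
    · intro h
      exact LinearMap.mem_ker.mpr (funext h)
  have hΛU : ∀ lam ∈ Λ, ∀ u ∈ U, (∑ i, ∑ j, lam i j * u i j) = 0 := by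
    intro lam hlam u hu
    induction hu using Submodule.span_induction with
    | mem x hx =>
      obtain ⟨t, rfl⟩ := hx
      exact (hΛmem lam).mp hlam t
    | zero => simp
    | add x y _ _ hx hy =>
      simp only [Pi.add_apply, mul_add, Finset.sum_add_distrib, hx, hy, add_zero]
    | smul c x _ hx =>
      simp only [Pi.smul_apply, smul_eq_mul]
      rw [show (∑ i, ∑ j, lam i j * (c * x i j)) = c * ∑ i, ∑ j, lam i j * x i j by
        rw [Finset.mul_sum]; congr 1; funext i; rw [Finset.mul_sum]; congr 1; funext j; ring]
      rw [hx, mul_zero]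
  have hΛv : ∀ lam ∈ Λ, ∀ s : ℕ, (∑ i, ∑ j, lam i j * v s i j) = 0 :=
    fun lam hlam s => hΛU lam hlam _ (hUs s)
  -- Λ is nontrivial
  have hΛne : Λ ≠ ⊥ := by
    intro h
    have hinj : Function.Injective Θ := LinearMap.ker_eq_bot.mp h
    have hle := LinearMap.finrank_le_finrank_of_injective hinj
    rw [Module.finrank_pi] at hle
    rw [Module.finrank_pi_fintype] at hle
    simp only [Module.finrank_pi, Fintype.card_fin] at hle
    omega
  -- Λ is Ψ-stable
  have hΨ : ∀ lam ∈ Λ, (fun i j => σ.symm (b i * lam i j)) ∈ Λ := by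
    intro lam hlam
    rw [hΛmem]
    intro t
    apply σ.injective
    rw [map_zero, map_sum]
    rw [show (∑ i, σ (∑ j, σ.symm (b i * lam i j) * v (t : ℕ) i j))
        = ∑ i, ∑ j, (lam i j * v ((t : ℕ) + 1) i j - γ * (lam i j * v (t : ℕ) i j)) by
      congr 1; funext i
      rw [map_sum]; congr 1; funext j
      rw [map_mul, RingEquiv.apply_symm_apply]
      rw [hvsucc, hD]
      ring]
    simp only [Finset.sum_sub_distrib, ← Finset.mul_sum]
    rw [hΛv lam hlam ((t : ℕ) + 1), hΛv lam hlam (t : ℕ)]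
    simp
  exact moore_key σ hfix b hb hdist β hβ Λ hΛne hΨ (fun lam hlam => hΛv lam hlam 0)



theorem moore_li {K F : Type*} [Field K] [Field F] [Algebra K F]
    {ℓ : ℕ} {n : Fin ℓ → ℕ}
    (σ : F ≃+* F) (γ : F)
    (hfix : ∀ x : F, σ x = x ↔ x ∈ (algebraMap K F).range)
    (b : Fin ℓ → F) (hb : ∀ i, b i ≠ 0)
    (hdist : ∀ i j : Fin ℓ, i ≠ j → ∀ c : F, c ≠ 0 → σ c * c⁻¹ * b i ≠ b j)
    (β : ∀ i : Fin ℓ, Fin (n i) → F)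
    (hβ : ∀ i, LinearIndependent K (β i))
    (D : (∀ i : Fin ℓ, Fin (n i) → F) → (∀ i : Fin ℓ, Fin (n i) → F))
    (hD : ∀ y i j, D y i j = γ * y i j + b i * σ (y i j))
    (m : ℕ) (hm : m < ∑ i, n i) :
    LinearIndependent F (fun t : Fin (m + 1) => D^[(t : ℕ)] β) := by
  induction m with
  | zero =>
    have hne := moore_step σ γ hfix b hb hdist β hβ D hD 0 hm
    rw [Set.range_eq_empty, Submodule.span_empty, Submodule.mem_bot] at hne
    haveI : Unique (Fin (0 + 1)) := ⟨⟨0⟩, fun a => Fin.ext (by omega)⟩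
    refine linearIndependent_unique_iff.mpr ?_
    simpa using hne
  | succ m ih =>
    have h' : m < ∑ i, n i := Nat.lt_of_succ_lt hm
    have li := ih h'
    have hne := moore_step σ γ hfix b hb hdist β hβ D hD (m + 1) hm
    have heq : (fun t : Fin (m + 1 + 1) => D^[(t : ℕ)] β)
        = Fin.snoc (fun t : Fin (m + 1) => D^[(t : ℕ)] β) (D^[m + 1] β) := by
      funext t
      induction t using Fin.lastCases with
      | last => simp [Fin.snoc_last]
      | cast t => simp [Fin.snoc_castSucc]
    rw [heq, linearIndependent_fin_snoc]
    exact ⟨li, hne⟩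


/-- Intersection step: under the same hypotheses (`1 ≤ k < n`), the intersection of
the row spaces of `M_k(β)_a` and `D_a(M_k(β)_a)` is the row space of
`M_{k−1}(D_a(β))_a` and has dimension `k−1`. -/

theorem moore_matrix_intersection_code {K F : Type*} [Field K] [Field F] [Algebra K F] [Fintype F]
    (σ : F ≃+* F) (γ : F)
    (hfix : ∀ x : F, σ x = x ↔ x ∈ (algebraMap K F).range)
    {ℓ : ℕ} (n : Fin ℓ → ℕ) (a : Fin ℓ → F)
    -- conjugacy: `Conj u w ↔ ∃ c ≠ 0, σ(c)·u·c⁻¹ + δ(c)·c⁻¹ = w` with `δ = γ(Id − σ)`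
    (Conj : F → F → Prop)
    (hConj : ∀ u w : F, Conj u w ↔ ∃ c : F, c ≠ 0 ∧ σ c * u * c⁻¹ + γ * (c - σ c) * c⁻¹ = w)
    (hnontriv : ∀ i, ¬ Conj γ (a i))
    (hdistinct : ∀ i j, i ≠ j → ¬ Conj (a i) (a j))
    (β : ∀ i : Fin ℓ, Fin (n i) → F)
    (hβ : ∀ i, LinearIndependent K (β i))
    (k : ℕ) (hk1 : 1 ≤ k) (hk : k < ∑ i, n i)
    (D : (∀ i : Fin ℓ, Fin (n i) → F) → (∀ i : Fin ℓ, Fin (n i) → F))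
    (hD : ∀ y i j, D y i j = σ (y i j) * a i + γ * (y i j - σ (y i j))) :
    (Submodule.span F (Set.range fun r : Fin k => D^[(r : ℕ)] β) ⊓
        Submodule.span F (Set.range fun r : Fin k => D^[(r : ℕ) + 1] β)
      = Submodule.span F (Set.range fun r : Fin (k - 1) => D^[(r : ℕ) + 1] β)) ∧
    Module.finrank F ↥(Submodule.span F (Set.range fun r : Fin k => D^[(r : ℕ)] β) ⊓
        Submodule.span F (Set.range fun r : Fin k => D^[(r : ℕ) + 1] β)) = k - 1 := by
  classical
  set b : Fin ℓ → F := fun i => a i - γ with hbdef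
  have hb : ∀ i, b i ≠ 0 := by
    intro i h
    apply hnontriv i
    rw [hConj]
    refine ⟨1, one_ne_zero, ?_⟩
    have hai : a i = γ := by
      have h2 : a i - γ = 0 := h
      rwa [sub_eq_zero] at h2
    rw [map_one, hai]
    field_simp
    ring
  have hdist : ∀ i j : Fin ℓ, i ≠ j → ∀ c : F, c ≠ 0 → σ c * c⁻¹ * b i ≠ b j := by
    intro i j hij c hc heq
    apply hdistinct i j hij
    rw [hConj]
    refine ⟨c, hc, ?_⟩
    simp only [hbdef] at heq
    field_simp at heq ⊢
    linear_combination heq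
  have hD' : ∀ y i j, D y i j = γ * y i j + b i * σ (y i j) := by
    intro y i j; rw [hD]; simp only [hbdef]; ring
  have LI : LinearIndependent F (fun t : Fin (k + 1) => D^[(t : ℕ)] β) :=
    moore_li σ γ hfix b hb hdist β hβ D hD' k hk
  -- the subfamily indexed by `1, ..., k-1`
  have li2 : LinearIndependent F (fun r : Fin (k - 1) => D^[(r : ℕ) + 1] β) := by
    let e : Fin (k - 1) → Fin (k + 1) := fun r => (r.castLE (by omega)).succ
    have hinj : Function.Injective e :=
      fun x y h => Fin.castLE_injective _ (Fin.succ_injective _ h)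
    have h := LI.comp e hinj
    have he : ((fun t : Fin (k + 1) => D^[(t : ℕ)] β) ∘ e)
        = fun r : Fin (k - 1) => D^[(r : ℕ) + 1] β := by
      funext r
      simp [e, Function.comp]
    rwa [he] at h
  -- the main equality
  have hmain : Submodule.span F (Set.range fun r : Fin k => D^[(r : ℕ)] β) ⊓
        Submodule.span F (Set.range fun r : Fin k => D^[(r : ℕ) + 1] β)
      = Submodule.span F (Set.range fun r : Fin (k - 1) => D^[(r : ℕ) + 1] β) := by
    apply le_antisymm
    · intro x hx
      rw [Submodule.mem_inf] at hx
      obtain ⟨hxA, hxB⟩ := hx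
      rw [mem_span_range_iff_exists_fun] at hxA hxB
      obtain ⟨f, hf⟩ := hxA
      obtain ⟨g, hg⟩ := hxB
      set F' : ℕ → F := fun t => if h : t < k then f ⟨t, h⟩ else 0 with hF'
      set G' : ℕ → F := fun t => if h : t < k then g ⟨t, h⟩ else 0 with hG'
      have hFsum : ∑ t ∈ Finset.range k, F' t • D^[t] β = x := by
        rw [← Fin.sum_univ_eq_sum_range (fun t => F' t • D^[t] β) k, ← hf]
        congr 1
        funext t
        simp [hF', t.isLt]
      have hGsum : ∑ t ∈ Finset.range k, G' t • D^[t + 1] β = x := by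
        rw [← Fin.sum_univ_eq_sum_range (fun t => G' t • D^[t + 1] β) k, ← hg]
        congr 1
        funext t
        simp [hG', t.isLt]
      set H : ℕ → F := fun t => F' t - (if t = 0 then 0 else G' (t - 1)) with hH
      have hzero : ∑ t : Fin (k + 1), H (t : ℕ) • D^[(t : ℕ)] β = 0 := by
        rw [Fin.sum_univ_eq_sum_range (fun t => H t • D^[t] β) (k + 1)]
        have hsplit : ∀ t : ℕ, H t • D^[t] β
            = F' t • D^[t] β - (if t = 0 then 0 else G' (t - 1)) • D^[t] β := by
          intro t; rw [hH]; rw [sub_smul]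
        simp only [hsplit]
        rw [Finset.sum_sub_distrib]
        have h1 : ∑ t ∈ Finset.range (k + 1), F' t • D^[t] β = x := by
          rw [Finset.sum_range_succ]
          have : F' k = 0 := by simp [hF']
          rw [this, zero_smul, add_zero, hFsum]
        have h2 : ∑ t ∈ Finset.range (k + 1),
            (if t = 0 then 0 else G' (t - 1)) • D^[t] β = x := by
          rw [Finset.sum_range_succ' (fun t => (if t = 0 then 0 else G' (t - 1)) • D^[t] β) k]
          simp only [Nat.succ_ne_zero, if_false, Nat.add_sub_cancel, eq_self_iff_true, if_true,
            zero_smul, add_zero]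
          exact hGsum
        rw [h1, h2, sub_self]
      have hall := Fintype.linearIndependent_iff.mp LI (fun t : Fin (k + 1) => H (t : ℕ)) hzero
      have h0 : F' 0 = 0 := by
        have := hall 0
        simpa [hH] using this
      rw [mem_span_range_iff_exists_fun]
      refine ⟨fun r => F' ((r : ℕ) + 1), ?_⟩
      rw [Fin.sum_univ_eq_sum_range (fun t => F' (t + 1) • D^[t + 1] β) (k - 1)]
      rw [← hFsum]
      conv_rhs => rw [show k = (k - 1) + 1 by omega]
      rw [Finset.sum_range_succ' (fun t => F' t • D^[t] β) (k - 1)]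
      rw [h0, zero_smul, add_zero]
    · apply le_inf
      · rw [Submodule.span_le]
        rintro _ ⟨r, rfl⟩
        exact Submodule.subset_span ⟨⟨(r : ℕ) + 1, by have := r.isLt; omega⟩, rfl⟩
      · rw [Submodule.span_le]
        rintro _ ⟨r, rfl⟩
        exact Submodule.subset_span ⟨⟨(r : ℕ), by have := r.isLt; omega⟩, rfl⟩
  refine ⟨hmain, ?_⟩
  rw [hmain, finrank_span_eq_card li2, Fintype.card_fin]
end

section
/- Let C = GLRS(β, a, v; n, k) and let ι = ((c_1,…,c_ℓ), (M_1,…,M_ℓ), π) be an F_{q^m}-linear sum-rank isometry. Then ι(C) is again a GLRS code with respect to the same σ and δ, namely GLRS(β̂, â, v̂; n, k) with β̂ = (β^{(π^{−1}(1))}M_1 | ⋯ | β^{(π^{−1}(ℓ))}M_ℓ), â = (a_{π^{−1}(1)},…,a_{π^{−1}(ℓ)}), and v̂ = (c_1 v_{π^{−1}(1)},…,c_ℓ v_{π^{−1}(ℓ)}). -/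
/-- A GLRS code is mapped by an `F_{q^m}`-linear sum-rank isometry
`ι = ((c₁,…,c_ℓ), (M₁,…,M_ℓ), π)` onto the GLRS code (w.r.t. the same `σ`, `δ`)
with parameters `β̂ = (β^{(π⁻¹(i))}Mᵢ)ᵢ`, `â = (a_{π⁻¹(i)})ᵢ`, `v̂ = (cᵢ v_{π⁻¹(i)})ᵢ`.
Codewords are blockwise generalized operator evaluations of skew polynomials
`f = Σ_{r<k} f_r x^r`, with `D_a(b) = σ(b)a + δ_γ(b)`, `δ_γ = γ(Id − σ)`. -/
theorem GLRS_closed_under_linear_isometry {K F : Type*} [Field K] [Field F] [Algebra K F]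
    (σ : F ≃+* F) (γ : F)
    (hσK : ∀ d : K, σ (algebraMap K F d) = algebraMap K F d)
    {ℓ : ℕ} (n : Fin ℓ → ℕ) (k : ℕ)
    (a : Fin ℓ → F) (β : ∀ i : Fin ℓ, Fin (n i) → F) (v : Fin ℓ → F) (hv : ∀ i, v i ≠ 0)
    (c : Fin ℓ → F) (hc : ∀ i, c i ≠ 0)
    (π : Equiv.Perm (Fin ℓ))
    (M : ∀ i : Fin ℓ, Matrix (Fin (n (π.symm i))) (Fin (n i)) K)
    (hM : ∀ i, Function.Bijective fun x : Fin (n (π.symm i)) → K => Matrix.vecMul x (M i)) :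
    let op : F → F → F := fun u b => σ b * u + γ * (b - σ b)
    let GLRS : (∀ i : Fin ℓ, Fin (n i) → F) → (Fin ℓ → F) → (Fin ℓ → F) →
        Set (∀ i : Fin ℓ, Fin (n i) → F) := fun B A V =>
      {x | ∃ f : Fin k → F, ∀ i j, x i j = V i * ∑ r : Fin k, f r * (op (A i))^[(r : ℕ)] (B i j)}
    ((fun x : ∀ i : Fin ℓ, Fin (n i) → F =>
        fun i j => c i * ∑ t, x (π.symm i) t * algebraMap K F (M i t j)) '' GLRS β a v)
      = GLRS (fun i j => ∑ t, β (π.symm i) t * algebraMap K F (M i t j))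
          (fun i => a (π.symm i)) (fun i => c i * v (π.symm i)) := by

  intro op GLRS
  -- op commutes with right multiplication by elements of the base field
  have hop_mul : ∀ (u b : F) (d : K),
      op u (b * algebraMap K F d) = op u b * algebraMap K F d := by
    intro u b d
    simp only [op, map_mul, hσK d]
    ring
  -- op commutes with K-linear combinations
  have hop_sum : ∀ (u : F) {N : ℕ} (g : Fin N → F) (d : Fin N → K),
      op u (∑ t, g t * algebraMap K F (d t)) = ∑ t, op u (g t) * algebraMap K F (d t) := by
    intro u N g d
    simp only [op, map_sum, map_mul, hσK, Finset.mul_sum, Finset.sum_mul,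
      ← Finset.sum_sub_distrib, ← Finset.sum_add_distrib]
    exact Finset.sum_congr rfl fun t _ => by ring
  have hiter : ∀ (u : F) (r : ℕ) {N : ℕ} (g : Fin N → F) (d : Fin N → K),
      (op u)^[r] (∑ t, g t * algebraMap K F (d t))
        = ∑ t, (op u)^[r] (g t) * algebraMap K F (d t) := by
    intro u r
    induction r with
    | zero => intro N g d; simp
    | succ r ih =>
      intro N g d
      rw [Function.iterate_succ_apply, hop_sum]
      exact ih _ _
  have core : ∀ (f : Fin k → F) (i : Fin ℓ) (j : Fin (n i)),
      c i * ∑ t, (v (π.symm i) * ∑ r : Fin k,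
          f r * (op (a (π.symm i)))^[(r : ℕ)] (β (π.symm i) t)) * algebraMap K F (M i t j)
        = (c i * v (π.symm i)) * ∑ r : Fin k,
          f r * (op (a (π.symm i)))^[(r : ℕ)] (∑ t, β (π.symm i) t * algebraMap K F (M i t j)) := by
    intro f i j
    have : ∀ r : Fin k, (op (a (π.symm i)))^[(r : ℕ)] (∑ t, β (π.symm i) t * algebraMap K F (M i t j))
        = ∑ t, (op (a (π.symm i)))^[(r : ℕ)] (β (π.symm i) t) * algebraMap K F (M i t j) :=
      fun r => hiter _ _ _ _
    simp only [this, Finset.mul_sum, Finset.sum_mul]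
    rw [Finset.sum_comm]
    exact Finset.sum_congr rfl fun t _ => Finset.sum_congr rfl fun r _ => by ring
  ext y
  simp only [Set.mem_image, Set.mem_setOf_eq, GLRS]
  constructor
  · rintro ⟨x, ⟨f, hf⟩, rfl⟩
    refine ⟨f, fun i j => ?_⟩
    simp only [hf]
    exact core f i j
  · rintro ⟨f, hf⟩
    refine ⟨fun i j => v i * ∑ r : Fin k, f r * (op (a i))^[(r : ℕ)] (β i j),
      ⟨f, fun i j => rfl⟩, ?_⟩
    funext i j
    rw [hf i j, ← core f i j]
end
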